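/- arXiv:1805.06258 — 2 statements merged into one kernel-verified Lean document; each statement's English description precedes it below -/
import Mathlib

section
/- Let H be a real Hilbert space, let v₁,…,vₘ ∈ H, let V be the subspace spanned by v₁,…,vₘ, and let P_V denote the orthogonal projection of H onto V. Let Φ : ℝ^m → ℝ be any function, let ν > 0, and define G : H → ℝ by G(f) = Φ(⟪v₁,f⟫,…,⟪vₘ,f⟫) + ν‖f‖². Then for every f ∈ H with f ∉ V one has the strict inequality G(P_V f) < G(f). -/
open scoped RealInnerProductSpace

/-!
Since every `vᵢ` lies in `V`, projecting onto `V` leaves the data `⟪vᵢ, f⟫` unchanged, while by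
Pythagoras it strictly shortens every `f ∉ V`; with `ν > 0` the penalty term strictly drops.
-/

namespace Submodule

variable {𝕜 E : Type*} [RCLike 𝕜] [NormedAddCommGroup E] [InnerProductSpace 𝕜 E]
  (K : Submodule 𝕜 E) [K.HasOrthogonalProjection]

theorem norm_orthogonalProjectionOnto_lt_of_notMem {x : E} (hx : x ∉ K) :
    ‖(K.orthogonalProjectionOnto x : E)‖ < ‖x‖ :=
  lt_of_le_of_ne (K.norm_starProjection_apply_le x) fun h ↦
    hx <| (K.mem_iff_norm_starProjection x).2 h

theorem inner_orthogonalProjectionOnto_eq_of_range_subset {ι : Type*} {v : ι → E}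
    (hv : Set.range v ⊆ K) (x : E) :
    (fun i ↦ inner 𝕜 (v i) (K.orthogonalProjectionOnto x : E)) = fun i ↦ inner 𝕜 (v i) x :=
  funext fun i ↦ K.inner_orthogonalProjectionOnto_eq_of_mem_left ⟨v i, hv ⟨i, rfl⟩⟩ x

end Submodule

theorem stmt_1_general {H : Type*} [NormedAddCommGroup H] [InnerProductSpace ℝ H]
    {m : ℕ} (v : Fin m → H) (Φ : (Fin m → ℝ) → ℝ) (ν : ℝ) (hν : 0 < ν)
    (G : H → ℝ) (hG : ∀ f, G f = Φ (fun i => ⟪v i, f⟫) + ν * ‖f‖ ^ 2)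
    (f : H) (hf : f ∉ Submodule.span ℝ (Set.range v)) :
    haveI : FiniteDimensional ℝ (Submodule.span ℝ (Set.range v)) :=
      FiniteDimensional.span_of_finite ℝ (Set.finite_range v)
    G (Submodule.orthogonalProjectionOnto (Submodule.span ℝ (Set.range v)) f : H) < G f := by
  have : FiniteDimensional ℝ (Submodule.span ℝ (Set.range v)) :=
    FiniteDimensional.span_of_finite ℝ (Set.finite_range v)
  set V := Submodule.span ℝ (Set.range v)
  have hdata := V.inner_orthogonalProjectionOnto_eq_of_range_subset Submodule.subset_span f
  have hnorm := V.norm_orthogonalProjectionOnto_lt_of_notMem hf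
  rw [hG, hG, hdata]
  gcongr

/-- For `G f = Φ(⟪v₁,f⟫,…,⟪vₘ,f⟫) + ν‖f‖²` with `ν > 0` and `V = span{v₁,…,vₘ}`,
orthogonal projection onto `V` strictly decreases `G` for any `f ∉ V`. -/
theorem stmt_1 {H : Type*} [NormedAddCommGroup H] [InnerProductSpace ℝ H] [CompleteSpace H]
    {m : ℕ} (v : Fin m → H) (Φ : (Fin m → ℝ) → ℝ) (ν : ℝ) (hν : 0 < ν)
    (G : H → ℝ) (hG : ∀ f, G f = Φ (fun i => ⟪v i, f⟫) + ν * ‖f‖ ^ 2)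
    (f : H) (hf : f ∉ Submodule.span ℝ (Set.range v)) :
    haveI : FiniteDimensional ℝ (Submodule.span ℝ (Set.range v)) :=
      FiniteDimensional.span_of_finite ℝ (Set.finite_range v)
    G (Submodule.orthogonalProjectionOnto (Submodule.span ℝ (Set.range v)) f : H) < G f :=
  stmt_1_general v Φ ν hν G hG f hf
end

section
/- Let m ∈ ℕ, let E = ℝ^m with the Euclidean norm ‖·‖, let v ∈ E, let τ > 0, κ > 0, n > 0 be real numbers and let μ ∈ [0,1]. Then the point x* = (1/(2τ(1−μ)/(κn) + 1)) · max(0, 1 − τμ/(κ·√n·‖v‖)) · v (interpreted as x* = 0 when v = 0) is the unique minimizer over E of the function x ↦ (τμ/√n)·‖x‖ + (τ(1−μ)/n)·‖x‖² + (κ/2)·‖x − v‖²; that is, for every x ∈ E the objective at x* is at most the objective at x, with equality only when x = x*. -/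
/-!
Completing the square turns `b‖x‖² + (c/2)‖x - v‖²` into `(b + c/2)‖x - w‖²` plus a constant, with
`w = c/(2b + c) • v`, so the objective is a positive multiple of the proximal objective
`θ‖x‖ + ‖x - w‖²/2` of the norm, whose minimizer is the soft-thresholding of `w`. For the latter,
writing `p = t • w`, the gap to the objective at any `x` is, after Cauchy–Schwarz, at least
`‖x - p‖²/2 + (‖x‖ - t‖w‖)(θ - (1 - t)‖w‖)`, and the choice `t = max 0 (1 - θ/‖w‖)` makes the
second factor nonnegative and zero as soon as `t ≠ 0`. The quadratic term `‖x - p‖²` in the gap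
gives uniqueness.
-/

open RealInnerProductSpace

lemma forall_le_and_eq_imp_of_add_sq_le {F : Type*} [NormedAddCommGroup F] {f : F → ℝ} {p : F}
    {β : ℝ} (hβ : 0 < β) (h : ∀ x, f p + β * ‖x - p‖ ^ 2 ≤ f x) :
    (∀ x, f p ≤ f x) ∧ (∀ x, f p = f x → x = p) := by
  refine ⟨fun x => le_trans (by simpa using mul_nonneg hβ.le (sq_nonneg ‖x - p‖)) (h x),
    fun x hx => ?_⟩
  have : β * ‖x - p‖ ^ 2 ≤ 0 := by linarith [h x]
  have : ‖x - p‖ ^ 2 = 0 := le_antisymm (nonpos_of_mul_nonpos_right this hβ) (sq_nonneg _)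
  simpa [sub_eq_zero] using this

variable {E : Type*} [NormedAddCommGroup E] [InnerProductSpace ℝ E]

noncomputable def softThreshold (θ : ℝ) (w : E) : E := max 0 (1 - θ / ‖w‖) • w

noncomputable def elasticNetProx (a b c : ℝ) (v : E) : E :=
  (c / (2 * b + c)) • softThreshold (a / c) v

noncomputable def elasticNetObjective (a b c : ℝ) (v x : E) : ℝ :=
  a * ‖x‖ + b * ‖x‖ ^ 2 + c / 2 * ‖x - v‖ ^ 2

lemma softThreshold_smul {r : ℝ} (hr : 0 < r) (θ : ℝ) (w : E) :
    softThreshold θ (r • w) = r • softThreshold (θ / r) w := by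
  rw [softThreshold, softThreshold, norm_smul, Real.norm_of_nonneg hr.le, smul_comm, div_div,
    mul_comm r]

lemma softThreshold_factor_slackness {θ V : ℝ} (hθ : 0 ≤ θ) (hV : 0 ≤ V) :
    let t := max 0 (1 - θ / V)
    0 ≤ t ∧ t ≤ 1 ∧ (1 - t) * V ≤ θ ∧ t * V * (θ - (1 - t) * V) = 0 := by
  intro t
  have ht1 : t ≤ 1 := max_le zero_le_one (by linarith [div_nonneg hθ hV])
  rcases hV.eq_or_lt with rfl | hV
  · exact ⟨le_max_left _ _, ht1, by simpa using hθ, by simp⟩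
  rcases le_total (θ / V) 1 with hle | hle
  · have ht : t = 1 - θ / V := max_eq_right (by linarith)
    have hθV : θ / V * V = θ := div_mul_cancel₀ θ hV.ne'
    exact ⟨le_max_left _ _, ht1, by rw [ht, sub_sub_cancel, hθV],
      by rw [ht, sub_sub_cancel, hθV, sub_self, mul_zero]⟩
  · have ht : t = 0 := max_eq_left (by linarith)
    have hVθ : V ≤ θ := by rwa [one_le_div hV] at hle
    refine ⟨le_max_left _ _, ht1, ?_, ?_⟩ <;> simp [ht, hVθ]

theorem softThreshold_add_sq_le {θ : ℝ} (hθ : 0 ≤ θ) (w x : E) :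
    θ * ‖softThreshold θ w‖ + ‖softThreshold θ w - w‖ ^ 2 / 2 + ‖x - softThreshold θ w‖ ^ 2 / 2
      ≤ θ * ‖x‖ + ‖x - w‖ ^ 2 / 2 := by
  obtain ⟨ht0, ht1, hslack, hcompl⟩ := softThreshold_factor_slackness hθ (norm_nonneg w)
  set t := max 0 (1 - θ / ‖w‖)
  have hp : softThreshold θ w = t • w := rfl
  have hnorm : ‖t • w‖ = t * ‖w‖ := by rw [norm_smul, Real.norm_of_nonneg ht0]
  have hpw : ‖t • w - w‖ ^ 2 = (1 - t) ^ 2 * ‖w‖ ^ 2 := by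
    rw [show t • w - w = (t - 1) • w by rw [sub_smul, one_smul], norm_smul, mul_pow,
      Real.norm_eq_abs, sq_abs]
    ring
  have hxp : ‖x - t • w‖ ^ 2 = ‖x‖ ^ 2 - 2 * (t * ⟪x, w⟫) + t ^ 2 * ‖w‖ ^ 2 := by
    rw [norm_sub_sq_real, real_inner_smul_right, hnorm]; ring
  have hcs : ⟪x, w⟫ ≤ ‖x‖ * ‖w‖ := real_inner_le_norm x w
  rw [hp, hnorm, hpw, hxp, norm_sub_sq_real]
  nlinarith [mul_nonneg (sub_nonneg.2 ht1) (sub_nonneg.2 hcs),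
    mul_nonneg (norm_nonneg x) (sub_nonneg.2 hslack)]

lemma elasticNetObjective_eq {a b c : ℝ} (hbc : 2 * b + c ≠ 0) (v x : E) :
    elasticNetObjective a b c v x
      = (2 * b + c) * (a / (2 * b + c) * ‖x‖ + ‖x - (c / (2 * b + c)) • v‖ ^ 2 / 2)
        + (c / 2 - c ^ 2 / (2 * (2 * b + c))) * ‖v‖ ^ 2 := by
  rw [elasticNetObjective, norm_sub_sq_real, norm_sub_sq_real, real_inner_smul_right, norm_smul,
    Real.norm_eq_abs, mul_pow, sq_abs]
  field_simp [show b * 2 + c ≠ 0 by rwa [mul_comm]]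
  ring

theorem elasticNetObjective_add_sq_le {a b c : ℝ} (ha : 0 ≤ a) (hc : 0 < c) (hbc : 0 < 2 * b + c)
    (v x : E) :
    elasticNetObjective a b c v (elasticNetProx a b c v)
        + (b + c / 2) * ‖x - elasticNetProx a b c v‖ ^ 2 ≤ elasticNetObjective a b c v x := by
  have hprox : elasticNetProx a b c v
      = softThreshold (a / (2 * b + c)) ((c / (2 * b + c)) • v) := by
    rw [softThreshold_smul (by positivity), elasticNetProx]
    congr 2
    field_simp
  have key := softThreshold_add_sq_le (div_nonneg ha hbc.le) ((c / (2 * b + c)) • v) x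
  rw [elasticNetObjective_eq hbc.ne', elasticNetObjective_eq hbc.ne', hprox]
  linarith [mul_le_mul_of_nonneg_left key hbc.le]

/-- closed form of the `ℛᴱᴺ` (elastic-net) proximal step: the unique minimizer of
`x ↦ (τμ/√n)‖x‖ + (τ(1−μ)/n)‖x‖² + (κ/2)‖x − v‖²` on `ℝ^m` is a scaled soft-thresholding of `v`. -/
theorem stmt_5 {m : ℕ} (v : EuclideanSpace ℝ (Fin m))
    (τ κ n μ : ℝ) (hτ : 0 < τ) (hκ : 0 < κ) (hn : 0 < n) (hμ : μ ∈ Set.Icc (0:ℝ) 1) :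
    let xstar : EuclideanSpace ℝ (Fin m) :=
      (1 / (2 * τ * (1 - μ) / (κ * n) + 1) * max 0 (1 - τ * μ / (κ * Real.sqrt n * ‖v‖))) • v
    (∀ x : EuclideanSpace ℝ (Fin m),
        τ * μ / Real.sqrt n * ‖xstar‖ + τ * (1 - μ) / n * ‖xstar‖ ^ 2
            + κ / 2 * ‖xstar - v‖ ^ 2 ≤
          τ * μ / Real.sqrt n * ‖x‖ + τ * (1 - μ) / n * ‖x‖ ^ 2
            + κ / 2 * ‖x - v‖ ^ 2) ∧
    (∀ x : EuclideanSpace ℝ (Fin m),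
        τ * μ / Real.sqrt n * ‖xstar‖ + τ * (1 - μ) / n * ‖xstar‖ ^ 2
            + κ / 2 * ‖xstar - v‖ ^ 2 =
          τ * μ / Real.sqrt n * ‖x‖ + τ * (1 - μ) / n * ‖x‖ ^ 2
            + κ / 2 * ‖x - v‖ ^ 2 → x = xstar) := by
  intro xstar
  obtain ⟨hμ0, hμ1⟩ := hμ
  have ha : 0 ≤ τ * μ / Real.sqrt n := by positivity
  have hb : 0 ≤ τ * (1 - μ) / n := div_nonneg (mul_nonneg hτ.le (by linarith)) hn.le
  have hbκ : 0 < 2 * (τ * (1 - μ) / n) + κ := by linarith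
  have hxstar : xstar = elasticNetProx (τ * μ / Real.sqrt n) (τ * (1 - μ) / n) κ v := by
    simp only [xstar, elasticNetProx, softThreshold, smul_smul]
    congr 2
    · field_simp
    · rw [div_div, div_div, ← mul_assoc, mul_comm (Real.sqrt n) κ]
  rw [hxstar]
  exact forall_le_and_eq_imp_of_add_sq_le (by linarith)
    (elasticNetObjective_add_sq_le ha hκ hbκ v)
end
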